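/- Let H be a cocommutative Hopf algebra and C ⊆ ker ε_H a Yetter-Drinfel'd submodule (a subspace closed under the right adjoint action and under the coaction h ↦ h_{(1)} ⊗ h_{(2)} − 1 ⊗ h). Then Ĉ := k·1_H ⊕ C is a rack bialgebra with respect to the restriction of Δ_H and the adjoint action ◁: it is a counital coaugmented coalgebra, ◁ is a coalgebra morphism satisfying (x ◁ y) ◁ z = (x ◁ z_{(1)}) ◁ (y ◁ z_{(2)}), x ◁ 1 = x, 1 ◁ x = ε(x)·1, and ε(x ◁ y) = ε(x)ε(y). -/

import Mathlib

open TensorProduct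

set_option maxHeartbeats 1000000

variable (k : Type) [Field k]

/-- The right adjoint action `a ⊗ b ↦ S(b₁) a b₂` of a Hopf algebra on itself. -/
noncomputable def adAct (H : Type) [Ring H] [HopfAlgebra k H] :
    H ⊗[k] H →ₗ[k] H :=
  LinearMap.mul' k H ∘ₗ
    TensorProduct.map
      (LinearMap.mul' k H ∘ₗ
        TensorProduct.map (HopfAlgebra.antipode (R := k)) LinearMap.id ∘ₗ
        (TensorProduct.comm k H H).toLinearMap)
      LinearMap.id ∘ₗ
    (TensorProduct.assoc k H H H).symm.toLinearMap ∘ₗ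
    TensorProduct.map LinearMap.id (Coalgebra.comul (R := k) (A := H))

/-!
Bialgebra maps between Hopf algebras commute with the antipodes (both `S ∘ f` and `f ∘ S` are
convolution inverses of `f`), hence with the adjoint actions; and the adjoint action of `A ⊗ B`
is the tensor product of those of `A` and `B`. For cocommutative `H` the comultiplication is a
bialgebra map `H → H ⊗ H`, which makes `◁` a coalgebra map; the counit `H → k` gives
`ε(x ◁ y) = ε(x) ε(y)`. Self-distributivity holds in every Hopf algebra: both sides equal
`x ◁ (y z)`, because `(x ◁ y) ◁ z = x ◁ (y z)` and `z₁ (y ◁ z₂) = z₁ S(z₂) y z₃ = y z`.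
Finally, for `c ∈ C` the element `Δc - 1 ⊗ c - c ⊗ 1` lies in `C ⊗ H` and is symmetric, so it
also lies in `H ⊗ C`, hence in `C ⊗ C`; thus `k·1 ⊕ C` is a subcoalgebra.
-/

open Coalgebra HopfAlgebra WithConv

namespace BialgHom
variable {R A B : Type*} [CommSemiring R] [Semiring A] [Semiring B] [HopfAlgebra R A]
  [HopfAlgebra R B]

theorem antipode_comp (f : A →ₐc[R] B) :
    HopfAlgebra.antipode R ∘ₗ (f : A →ₗ[R] B) = (f : A →ₗ[R] B) ∘ₗ HopfAlgebra.antipode R := by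
  apply toConv_injective
  refine left_inv_eq_right_inv (a := toConv (f : A →ₗ[R] B)) ?_ ?_
  · have h := LinearMap.convMul_comp_coalgHom_distrib (toConv (HopfAlgebra.antipode R (A := B)))
      (toConv LinearMap.id) (f : A →ₗc[R] B)
    rw [LinearMap.antipode_mul_id] at h
    apply ofConv_injective
    convert h.symm using 1
    · rfl
    · ext a; simp
  · have h := LinearMap.algHom_comp_convMul_distrib (f : A →ₐ[R] B) (toConv LinearMap.id)
      (toConv (HopfAlgebra.antipode R (A := A)))
    rw [LinearMap.id_mul_antipode] at h
    apply ofConv_injective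
    convert h.symm using 1
    · rfl
    · ext a; exact (AlgHomClass.commutes f _).symm

theorem map_antipode (f : A →ₐc[R] B) (a : A) :
    f (HopfAlgebra.antipode R a) = HopfAlgebra.antipode R (f a) :=
  (LinearMap.congr_fun (antipode_comp f) a).symm

end BialgHom

namespace TensorProduct

variable {K V W : Type*} [Field K] [AddCommGroup V] [Module K V] [AddCommGroup W] [Module K W]

theorem range_map_subtype_id_inf_range_map_id_subtype_le (p : Submodule K V) (q : Submodule K W) :
    LinearMap.range (map p.subtype (LinearMap.id (M := W))) ⊓
        LinearMap.range (map (LinearMap.id (M := V)) q.subtype) ≤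
      LinearMap.range (map p.subtype q.subtype) := by
  rintro u ⟨⟨s, rfl⟩, t, ht⟩
  -- With retractions `πp`, `πq`, the map `(p.subtype ∘ πp) ⊗ (q.subtype ∘ πq)` fixes `u`.
  obtain ⟨πp, hπp⟩ := p.subtype.exists_leftInverse_of_injective p.ker_subtype
  obtain ⟨πq, hπq⟩ := q.subtype.exists_leftInverse_of_injective q.ker_subtype
  have hP : map (p.subtype ∘ₗ πp) LinearMap.id ∘ₗ map p.subtype LinearMap.id =
      map p.subtype (LinearMap.id (M := W)) := by
    simp only [← map_comp, LinearMap.comp_assoc, hπp, LinearMap.comp_id]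
  have hQ : map LinearMap.id (q.subtype ∘ₗ πq) ∘ₗ map LinearMap.id q.subtype =
      map (LinearMap.id (M := V)) q.subtype := by
    simp only [← map_comp, LinearMap.comp_assoc, hπq, LinearMap.comp_id]
  refine ⟨map πp πq (map p.subtype LinearMap.id s), ?_⟩
  calc map p.subtype q.subtype (map πp πq (map p.subtype LinearMap.id s))
      = map (p.subtype ∘ₗ πp) LinearMap.id
          (map LinearMap.id (q.subtype ∘ₗ πq) (map p.subtype LinearMap.id s)) := by
        simp only [← LinearMap.comp_apply, ← map_comp, LinearMap.comp_id, LinearMap.id_comp,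
          LinearMap.comp_assoc]
    _ = map p.subtype LinearMap.id s := by
        rw [← ht, ← LinearMap.comp_apply (map LinearMap.id _), hQ, ht, ← LinearMap.comp_apply, hP]

end TensorProduct

section Subcoalgebra

variable {k} {H : Type*} [Ring H] [Bialgebra k H] [IsCocomm k H] {C : Submodule k H}

theorem comul_sub_one_tmul_sub_tmul_one_mem (hcoact : ∀ c ∈ C,
      comul (R := k) c - (1 : H) ⊗ₜ[k] c ∈ LinearMap.range (map C.subtype (LinearMap.id (M := H))))
    {c : H} (hc : c ∈ C) :
    comul (R := k) c - 1 ⊗ₜ c - c ⊗ₜ 1 ∈ LinearMap.range (map C.subtype C.subtype) := by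
  set u := comul (R := k) c - 1 ⊗ₜ c - c ⊗ₜ 1
  have hleft : u ∈ LinearMap.range (map C.subtype (LinearMap.id (M := H))) :=
    sub_mem (hcoact c hc) ⟨⟨c, hc⟩ ⊗ₜ 1, rfl⟩
  have hsymm : TensorProduct.comm k H H u = u := by
    simp only [u, map_sub, comm_tmul, comm_comul]
    abel
  have hright : u ∈ LinearMap.range (map (LinearMap.id (M := H)) C.subtype) := by
    obtain ⟨s, hs⟩ := hleft
    exact ⟨TensorProduct.comm k C H s, by rw [map_comm, hs, hsymm]⟩
  exact range_map_subtype_id_inf_range_map_id_subtype_le C C ⟨hleft, hright⟩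

theorem comul_mem_map₂_span_one_sup (hcoact : ∀ c ∈ C,
      comul (R := k) c - (1 : H) ⊗ₜ[k] c ∈ LinearMap.range (map C.subtype (LinearMap.id (M := H))))
    {a : H} (ha : a ∈ Submodule.span k {1} ⊔ C) :
    comul (R := k) a ∈
      Submodule.map₂ (mk k H H) (Submodule.span k {1} ⊔ C) (Submodule.span k {1} ⊔ C) := by
  set D := Submodule.span k {(1 : H)} ⊔ C
  have h1 : (1 : H) ∈ D := Submodule.mem_sup_left (Submodule.mem_span_singleton_self 1)
  have hCD : C ≤ D := le_sup_right
  suffices D ≤ (Submodule.map₂ (mk k H H) D D).comap (comul (R := k)) from this ha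
  refine sup_le ((Submodule.span_singleton_le_iff_mem _ _).mpr ?_) fun c hc => ?_
  · simpa [Bialgebra.comul_one, Algebra.TensorProduct.one_def] using
      Submodule.apply_mem_map₂ (mk k H H) h1 h1
  · have hcore : comul (R := k) c - 1 ⊗ₜ c - c ⊗ₜ 1 ∈ Submodule.map₂ (mk k H H) D D := by
      refine Submodule.map₂_le_map₂ hCD hCD ?_
      rw [← range_mapIncl]
      exact comul_sub_one_tmul_sub_tmul_one_mem hcoact hc
    have hsplit : comul (R := k) c = (comul c - 1 ⊗ₜ c - c ⊗ₜ 1) + 1 ⊗ₜ c + c ⊗ₜ 1 := by abel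
    rw [Submodule.mem_comap, hsplit]
    exact add_mem (add_mem hcore (Submodule.apply_mem_map₂ _ h1 (hCD hc)))
      (Submodule.apply_mem_map₂ _ (hCD hc) h1)

end Subcoalgebra

section AdjointAction

variable {k} {A B : Type} [Ring A] [HopfAlgebra k A] [Ring B] [HopfAlgebra k B]

theorem adAct_tmul_eq_sum (x y : A) {ι : Type*} (ℛy : Repr k y ι) :
    adAct k A (x ⊗ₜ y) = ∑ i ∈ ℛy.index, antipode k (ℛy.left i) * x * ℛy.right i := by
  simp [adAct, ← ℛy.eq, tmul_sum, mul_assoc]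

theorem adAct_tmul_one (x : A) : adAct k A (x ⊗ₜ 1) = x := by
  simp [adAct, Bialgebra.comul_one, Algebra.TensorProduct.one_def]

theorem adAct_one_tmul (y : A) : adAct k A (1 ⊗ₜ y) = counit (R := k) y • (1 : A) := by
  simp [adAct_tmul_eq_sum 1 y (ℛ k y), sum_antipode_mul_eq_smul]

theorem adAct_scalar_tmul (a b : k) : adAct k k (a ⊗ₜ b) = a * b := by
  simp [adAct]

theorem BialgHom.map_adAct (f : A →ₐc[k] B) (x y : A) :
    f (adAct k A (x ⊗ₜ y)) = adAct k B (f x ⊗ₜ f y) := by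
  simp [adAct_tmul_eq_sum x y (ℛ k y), adAct_tmul_eq_sum (f x) (f y) ((ℛ k y).induced f),
    BialgHom.map_antipode]

theorem counit_adAct (x y : A) :
    counit (R := k) (adAct k A (x ⊗ₜ y)) = counit (R := k) x * counit (R := k) y := by
  simpa [adAct_scalar_tmul] using (Bialgebra.counitBialgHom k A).map_adAct x y

theorem adAct_tmul_tmul (a c : A) (b d : B) :
    adAct k (A ⊗[k] B) ((a ⊗ₜ b) ⊗ₜ (c ⊗ₜ d)) = adAct k A (a ⊗ₜ c) ⊗ₜ adAct k B (b ⊗ₜ d) := by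
  simp [adAct_tmul_eq_sum _ _ ((ℛ k c).tmul (ℛ k d)), adAct_tmul_eq_sum _ c (ℛ k c),
    adAct_tmul_eq_sum _ d (ℛ k d), Finset.sum_product, sum_tmul, tmul_sum]
  exact Finset.sum_comm

theorem adAct_eq_map_comp_tensorTensorTensorComm :
    adAct k (A ⊗[k] B) =
      map (adAct k A) (adAct k B) ∘ₗ (tensorTensorTensorComm k A B A B).toLinearMap := by
  ext a b c d
  exact adAct_tmul_tmul a c b d

theorem comul_comp_adAct [IsCocomm k A] :
    comul ∘ₗ adAct k A =
      map (adAct k A) (adAct k A) ∘ₗ (tensorTensorTensorComm k A A A A).toLinearMap ∘ₗ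
        map comul comul := by
  rw [← LinearMap.comp_assoc, ← adAct_eq_map_comp_tensorTensorTensorComm]
  ext x y
  exact (Bialgebra.comulBialgHom k A).map_adAct x y

theorem adAct_adAct (x y z : A) :
    adAct k A (adAct k A (x ⊗ₜ y) ⊗ₜ z) = adAct k A (x ⊗ₜ (y * z)) := by
  simp only [adAct_tmul_eq_sum _ _ (ℛ k z), adAct_tmul_eq_sum _ y (ℛ k y),
    adAct_tmul_eq_sum _ _ ((ℛ k y).mul (ℛ k z)), Repr.mul_index, Repr.mul_left, Repr.mul_right,
    Finset.sum_product, Finset.sum_mul, Finset.mul_sum, antipode_mul_antidistrib, mul_assoc]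
  exact Finset.sum_comm

theorem toConv_adAct_comp_mk (y : A) :
    toConv (adAct k A ∘ₗ mk k A A y) =
      toConv (LinearMap.mulRight k y ∘ₗ antipode k) * toConv LinearMap.id := by
  ext z
  simp [(ℛ k z).convMul_apply, adAct_tmul_eq_sum y z (ℛ k z)]

theorem id_convMul_adAct_comp_mk (y : A) :
    toConv LinearMap.id * toConv (adAct k A ∘ₗ mk k A A y) = toConv (LinearMap.mulLeft k y) := by
  have hright : toConv LinearMap.id * toConv (LinearMap.mulRight k y ∘ₗ antipode k) =
      toConv (LinearMap.mulRight k y ∘ₗ (1 : WithConv (A →ₗ[k] A)).ofConv) := by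
    ext z
    simp [(ℛ k z).convMul_apply, ← Finset.sum_mul, ← mul_assoc,
      sum_mul_antipode_eq_algebraMap_counit]
  rw [toConv_adAct_comp_mk, ← mul_assoc, hright]
  ext z
  simp only [(ℛ k z).convMul_apply, LinearMap.comp_apply, LinearMap.convOne_apply,
    LinearMap.mulRight_apply, LinearMap.id_apply, LinearMap.mulLeft_apply, ← Algebra.smul_def,
    smul_mul_assoc, ← mul_smul_comm, ← Finset.mul_sum, sum_counit_smul]

theorem adAct_comp_map_adAct_id :
    adAct k A ∘ₗ map (adAct k A) LinearMap.id =
      adAct k A ∘ₗ map (adAct k A) (adAct k A) ∘ₗ (tensorTensorTensorComm k A A A A).toLinearMap ∘ₗ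
        map (LinearMap.id (M := A ⊗[k] A)) comul := by
  ext x y z
  have hsum := congr(ofConv $(id_convMul_adAct_comp_mk (k := k) y) z)
  simp only [(ℛ k z).convMul_apply, LinearMap.id_apply, LinearMap.comp_apply, mk_apply,
    LinearMap.mulLeft_apply] at hsum
  simp [adAct_adAct, ← (ℛ k z).eq, tmul_sum, ← hsum]


theorem adAct_mem_span_one_sup {C : Submodule k A}
    (hadj : ∀ a ∈ C, ∀ b ∈ C, adAct k A (a ⊗ₜ b) ∈ C) {a b : A}
    (ha : a ∈ Submodule.span k {1} ⊔ C) (hb : b ∈ Submodule.span k {1} ⊔ C) :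
    adAct k A (a ⊗ₜ b) ∈ Submodule.span k {1} ⊔ C := by
  set D := Submodule.span k {(1 : A)} ⊔ C
  have hright (c : A) (hc : c ∈ C) : D ≤ D.comap (adAct k A ∘ₗ (mk k A A).flip c) := by
    refine sup_le ((Submodule.span_singleton_le_iff_mem _ _).mpr ?_) fun x hx =>
      Submodule.mem_sup_right (hadj x hx c hc)
    change adAct k A (1 ⊗ₜ c) ∈ D
    rw [adAct_one_tmul]
    exact Submodule.mem_sup_left (Submodule.smul_mem _ _ (Submodule.mem_span_singleton_self 1))
  have hleft : D ≤ D.comap (adAct k A ∘ₗ mk k A A a) := by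
    refine sup_le ((Submodule.span_singleton_le_iff_mem _ _).mpr ?_) fun c hc => hright c hc ha
    change adAct k A (a ⊗ₜ 1) ∈ D
    rwa [adAct_tmul_one]
  exact hleft hb

end AdjointAction

theorem yd_submodule_gives_rack_bialgebra (H : Type) [Ring H] [HopfAlgebra k H]
    (cocomm : (TensorProduct.comm k H H).toLinearMap ∘ₗ
        (Coalgebra.comul (R := k) (A := H)) = Coalgebra.comul)
    (C : Submodule k H)
    (hcoact : ∀ c ∈ C,
      Coalgebra.comul (R := k) c - (1 : H) ⊗ₜ[k] c ∈
        LinearMap.range (TensorProduct.map C.subtype (LinearMap.id (M := H))))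
    (hadj : ∀ a ∈ C, ∀ b ∈ C, adAct k H (a ⊗ₜ[k] b) ∈ C) :
    -- the coaugmented subcoalgebra Ĉ = k·1 ⊕ C
    ∀ Chat : Submodule k H, Chat = Submodule.span k {(1 : H)} ⊔ C →
      -- Ĉ is stable under the coproduct, i.e. it is a subcoalgebra
      (∀ a ∈ Chat, Coalgebra.comul (R := k) a ∈
        LinearMap.range (TensorProduct.map Chat.subtype Chat.subtype)) ∧
      -- `1` is a group-like coaugmentation of Ĉ
      (1 : H) ∈ Chat ∧
      Coalgebra.comul (R := k) (1 : H) = (1 : H) ⊗ₜ[k] (1 : H) ∧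
      Coalgebra.counit (R := k) (1 : H) = (1 : k) ∧
      -- `◁` restricts to Ĉ
      (∀ a ∈ Chat, ∀ b ∈ Chat, adAct k H (a ⊗ₜ[k] b) ∈ Chat) ∧
      -- `x ◁ 1 = x` and `1 ◁ x = ε(x)·1` on Ĉ
      (∀ a ∈ Chat, adAct k H (a ⊗ₜ[k] (1 : H)) = a) ∧
      (∀ a ∈ Chat, adAct k H ((1 : H) ⊗ₜ[k] a) =
        Coalgebra.counit (R := k) a • (1 : H)) ∧
      -- `ε(x ◁ y) = ε(x)ε(y)` on Ĉ
      (∀ a ∈ Chat, ∀ b ∈ Chat, Coalgebra.counit (R := k) (adAct k H (a ⊗ₜ[k] b)) =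
        Coalgebra.counit (R := k) a * Coalgebra.counit (R := k) b) ∧
      -- `◁` is a morphism of coalgebras
      ((Coalgebra.comul (R := k) (A := H)) ∘ₗ adAct k H =
        TensorProduct.map (adAct k H) (adAct k H) ∘ₗ
          (TensorProduct.tensorTensorTensorComm k H H H H).toLinearMap ∘ₗ
          TensorProduct.map (Coalgebra.comul (R := k) (A := H))
            (Coalgebra.comul (R := k) (A := H))) ∧
      -- self-distributivity `(x ◁ y) ◁ z = (x ◁ z₁) ◁ (y ◁ z₂)`
      (adAct k H ∘ₗ TensorProduct.map (adAct k H) (LinearMap.id (M := H)) =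
        adAct k H ∘ₗ TensorProduct.map (adAct k H) (adAct k H) ∘ₗ
          (TensorProduct.tensorTensorTensorComm k H H H H).toLinearMap ∘ₗ
          TensorProduct.map (LinearMap.id (M := H ⊗[k] H))
            (Coalgebra.comul (R := k) (A := H))) := by
  intro Chat rfl
  have : IsCocomm k H := ⟨cocomm⟩
  refine ⟨fun a ha => (range_mapIncl _ _).ge (comul_mem_map₂_span_one_sup hcoact ha),
    Submodule.mem_sup_left (Submodule.mem_span_singleton_self 1),
    by rw [Bialgebra.comul_one, Algebra.TensorProduct.one_def], Bialgebra.counit_one,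
    fun a ha b hb => adAct_mem_span_one_sup hadj ha hb, fun a _ => adAct_tmul_one a,
    fun a _ => adAct_one_tmul a,
    fun a _ b _ => counit_adAct a b, comul_comp_adAct, adAct_comp_map_adAct_id⟩
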